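/- arXiv:2309.06032 — 3 statements merged into one kernel-verified Lean document; each statement's English description precedes it below -/
import Mathlib

section
/- Let Ω ⊆ ℝ³ be open and let R : Ω → ℝ^{3×3} be differentiable with R(x) ∈ SO(3) for every x ∈ Ω. Then for every x ∈ Ω one has the two-sided pointwise control (1/2)‖(Curl R)(x)‖² ≤ ∑_{i=1}^{3} ‖∂_{x_i}R(x)‖² ≤ 2‖(Curl R)(x)‖². In particular a positive definite quadratic expression in Curl R energetically controls all first derivatives of R and vice versa. -/
/-!
Differentiating `RᵀR = 1` shows that each `Wₖ = Rᵀ ∂ₖR` is skew, i.e. the cross-product matrix of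
a vector `wₖ`; and since left multiplication by `R` commutes with the row-wise curl and preserves
the Frobenius norm, both sides of the inequality may be computed for `Wₖ` instead of `∂ₖR`. With
`w` the matrix of the `wₖ`, one finds `∑ ‖Wₖ‖² = 2‖w‖²` and `‖Curl‖² = ‖w‖² + (tr w)²`, and the
claim follows from `0 ≤ (tr w)² ≤ 3‖w‖²`.
-/

open Matrix Filter Topology

noncomputable section

/-- Partial derivative in the `k`-th coordinate direction of a scalar field on `ℝ³`. -/
def pd (f : (Fin 3 → ℝ) → ℝ) (k : Fin 3) (x : Fin 3 → ℝ) : ℝ :=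
  fderiv ℝ f x (Pi.single k 1)

/-- Entrywise partial derivative `∂_{x_k} R` of a matrix field. -/
def pderivM (R : (Fin 3 → ℝ) → Matrix (Fin 3) (Fin 3) ℝ) (k : Fin 3)
    (x : Fin 3 → ℝ) : Matrix (Fin 3) (Fin 3) ℝ :=
  Matrix.of fun i j => pd (fun y => R y i j) k x

/-- Row-wise Curl of a matrix field: the `i`-th row of `mcurl P x` is the
curl of the `i`-th row of `P` at `x`. -/
def mcurl (P : (Fin 3 → ℝ) → Matrix (Fin 3) (Fin 3) ℝ) (x : Fin 3 → ℝ) :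
    Matrix (Fin 3) (Fin 3) ℝ :=
  Matrix.of fun i =>
    ![pd (fun y => P y i 2) 1 x - pd (fun y => P y i 1) 2 x,
      pd (fun y => P y i 0) 2 x - pd (fun y => P y i 2) 0 x,
      pd (fun y => P y i 1) 0 x - pd (fun y => P y i 0) 1 x]

/-- Squared Frobenius norm `‖X‖² = tr(XᵀX)`. -/
def mnormSq {n : ℕ} (X : Matrix (Fin n) (Fin n) ℝ) : ℝ :=
  Matrix.trace (Xᵀ * X)

lemma mnormSq_eq_sum_sq {n : ℕ} (X : Matrix (Fin n) (Fin n) ℝ) :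
    mnormSq X = ∑ i, ∑ j, X i j ^ 2 := by
  rw [Finset.sum_comm]
  simp [mnormSq, Matrix.trace, Matrix.mul_apply, sq]

lemma mnormSq_mul_left {n : ℕ} {Q : Matrix (Fin n) (Fin n) ℝ} (hQ : Qᵀ * Q = 1)
    (X : Matrix (Fin n) (Fin n) ℝ) : mnormSq (Q * X) = mnormSq X := by
  rw [mnormSq, mnormSq, transpose_mul, Matrix.mul_assoc, ← Matrix.mul_assoc Qᵀ, hQ,
    Matrix.one_mul]

section Calculus

variable {x : Fin 3 → ℝ} {k : Fin 3}

lemma pd_mul {f g : (Fin 3 → ℝ) → ℝ} (hf : DifferentiableAt ℝ f x)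
    (hg : DifferentiableAt ℝ g x) :
    pd (fun y => f y * g y) k x = pd f k x * g x + f x * pd g k x := by
  simp only [pd, fderiv_fun_mul hf hg, _root_.add_apply,
    _root_.smul_apply, smul_eq_mul]
  ring

lemma pd_sum {ι : Type*} (s : Finset ι) {f : ι → (Fin 3 → ℝ) → ℝ}
    (hf : ∀ i ∈ s, DifferentiableAt ℝ (f i) x) :
    pd (fun y => ∑ i ∈ s, f i y) k x = ∑ i ∈ s, pd (f i) k x := by
  simp only [pd, fderiv_fun_sum hf, _root_.sum_apply]

lemma pd_eq_zero_of_eventuallyEq_const {f : (Fin 3 → ℝ) → ℝ} {c : ℝ}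
    (h : f =ᶠ[𝓝 x] fun _ => c) : pd f k x = 0 := by
  simp only [pd, h.fderiv_eq, fderiv_const_apply, _root_.zero_apply]

lemma pderivM_mul {A B : (Fin 3 → ℝ) → Matrix (Fin 3) (Fin 3) ℝ}
    (hA : ∀ i j, DifferentiableAt ℝ (fun y => A y i j) x)
    (hB : ∀ i j, DifferentiableAt ℝ (fun y => B y i j) x) :
    pderivM (fun y => A y * B y) k x = pderivM A k x * B x + A x * pderivM B k x := by
  ext i j
  simp only [pderivM, Matrix.of_apply, Matrix.mul_apply, Matrix.add_apply]
  rw [pd_sum (f := fun m y => A y i m * B y m j) _ fun m _ => (hA i m).mul (hB m j),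
    ← Finset.sum_add_distrib]
  exact Finset.sum_congr rfl fun m _ => pd_mul (hA i m) (hB m j)

lemma pderivM_eq_zero_of_eventuallyEq_const {A : (Fin 3 → ℝ) → Matrix (Fin 3) (Fin 3) ℝ}
    {C : Matrix (Fin 3) (Fin 3) ℝ} (h : A =ᶠ[𝓝 x] fun _ => C) : pderivM A k x = 0 := by
  ext i j
  exact pd_eq_zero_of_eventuallyEq_const (h.mono fun y hy => congrFun (congrFun hy i) j)

lemma transpose_transpose_mul_pderivM_eq_neg {R : (Fin 3 → ℝ) → Matrix (Fin 3) (Fin 3) ℝ}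
    (hR : ∀ i j, DifferentiableAt ℝ (fun y => R y i j) x)
    (hO : ∀ᶠ y in 𝓝 x, (R y)ᵀ * R y = 1) :
    ((R x)ᵀ * pderivM R k x)ᵀ = -((R x)ᵀ * pderivM R k x) := by
  have h := pderivM_mul (k := k) (A := fun y => (R y)ᵀ) (fun i j => hR j i) hR
  rw [pderivM_eq_zero_of_eventuallyEq_const hO] at h
  rw [transpose_mul, transpose_transpose, eq_neg_iff_add_eq_zero]
  exact h.symm

end Calculus

/-- The row-wise curl assembled from the three partial derivatives `D k = ∂ₖP`. -/
def rowCurl (D : Fin 3 → Matrix (Fin 3) (Fin 3) ℝ) : Matrix (Fin 3) (Fin 3) ℝ :=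
  Matrix.of fun i => ![D 1 i 2 - D 2 i 1, D 2 i 0 - D 0 i 2, D 0 i 1 - D 1 i 0]

lemma mcurl_eq_rowCurl (P : (Fin 3 → ℝ) → Matrix (Fin 3) (Fin 3) ℝ) (x : Fin 3 → ℝ) :
    mcurl P x = rowCurl fun k => pderivM P k x :=
  rfl

lemma rowCurl_mul_left (Q : Matrix (Fin 3) (Fin 3) ℝ) (D : Fin 3 → Matrix (Fin 3) (Fin 3) ℝ) :
    rowCurl (fun k => Q * D k) = Q * rowCurl D := by
  ext i j
  fin_cases j <;>
    simp [rowCurl, Matrix.mul_apply, Fin.sum_univ_three] <;> ring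

lemma eq_of_transpose_eq_neg {W : Matrix (Fin 3) (Fin 3) ℝ} (hW : Wᵀ = -W) :
    W = !![0, W 0 1, W 0 2; -W 0 1, 0, W 1 2; -W 0 2, -W 1 2, 0] := by
  have h : ∀ i j, W j i = -W i j := fun i j => congrFun (congrFun hW i) j
  ext i j
  fin_cases i <;> fin_cases j <;> simp <;> linarith [h 0 0, h 1 1, h 2 2, h 0 1, h 0 2, h 1 2]

lemma mnormSq_rowCurl_le_and_sum_mnormSq_le {W : Fin 3 → Matrix (Fin 3) (Fin 3) ℝ}
    (hW : ∀ k, (W k)ᵀ = -W k) :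
    (1 / 2 : ℝ) * mnormSq (rowCurl W) ≤ ∑ k, mnormSq (W k) ∧
      ∑ k, mnormSq (W k) ≤ 2 * mnormSq (rowCurl W) := by
  set S := ∑ k, (W k 0 1 ^ 2 + W k 0 2 ^ 2 + W k 1 2 ^ 2)
  -- `S = ‖w‖²` and `t = tr w`, where `W k` is the cross-product matrix of `w k`
  set t := W 1 0 2 - W 2 0 1 - W 0 1 2
  have hsum : ∑ k, mnormSq (W k) = 2 * S := by
    simp only [S, Fin.sum_univ_three]
    rw [eq_of_transpose_eq_neg (hW 0), eq_of_transpose_eq_neg (hW 1),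
      eq_of_transpose_eq_neg (hW 2)]
    simp only [mnormSq_eq_sum_sq, Fin.sum_univ_three, of_apply, cons_val', cons_val_zero,
      cons_val_one, cons_val, cons_val_fin_one]
    ring
  have hcurl : mnormSq (rowCurl W) = S + t ^ 2 := by
    simp only [S, t, Fin.sum_univ_three]
    rw [rowCurl, eq_of_transpose_eq_neg (hW 0), eq_of_transpose_eq_neg (hW 1),
      eq_of_transpose_eq_neg (hW 2)]
    simp only [mnormSq_eq_sum_sq, Fin.sum_univ_three, of_apply, cons_val', cons_val_zero,
      cons_val_one, cons_val, cons_val_fin_one]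
    ring
  have htr : t ^ 2 ≤ 3 * S := by
    simp only [S, t, Fin.sum_univ_three]
    nlinarith [sq_nonneg (W 1 0 2 + W 2 0 1), sq_nonneg (W 1 0 2 + W 0 1 2),
      sq_nonneg (W 2 0 1 - W 0 1 2), sq_nonneg (W 0 0 1), sq_nonneg (W 0 0 2),
      sq_nonneg (W 1 0 1), sq_nonneg (W 1 1 2), sq_nonneg (W 2 0 2), sq_nonneg (W 2 1 2)]
  constructor <;> linarith [sq_nonneg t]

theorem stmt_7 (Ω : Set (Fin 3 → ℝ)) (hΩ : IsOpen Ω)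
    (R : (Fin 3 → ℝ) → Matrix (Fin 3) (Fin 3) ℝ)
    (hdiff : ∀ i j : Fin 3, DifferentiableOn ℝ (fun y => R y i j) Ω)
    (hSO : ∀ x ∈ Ω, (R x)ᵀ * R x = 1 ∧ (R x).det = 1) :
    ∀ x ∈ Ω,
      (1 / 2 : ℝ) * mnormSq (mcurl R x) ≤ ∑ k : Fin 3, mnormSq (pderivM R k x) ∧
      ∑ k : Fin 3, mnormSq (pderivM R k x) ≤ 2 * mnormSq (mcurl R x) := by
  intro x hx
  have hxΩ : Ω ∈ 𝓝 x := hΩ.mem_nhds hx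
  have hR : ∀ i j, DifferentiableAt ℝ (fun y => R y i j) x :=
    fun i j => (hdiff i j).differentiableAt hxΩ
  have hQ : (R x)ᵀ * R x = 1 := (hSO x hx).1
  set W : Fin 3 → Matrix (Fin 3) (Fin 3) ℝ := fun k => (R x)ᵀ * pderivM R k x
  have hW : ∀ k, (W k)ᵀ = -W k := fun k =>
    transpose_transpose_mul_pderivM_eq_neg hR (eventually_of_mem hxΩ fun y hy => (hSO y hy).1)
  have hRW : (fun k => pderivM R k x) = fun k => R x * W k := by
    funext k
    rw [← Matrix.mul_assoc, mul_eq_one_comm.mp hQ, Matrix.one_mul]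
  have hcurl : mnormSq (mcurl R x) = mnormSq (rowCurl W) := by
    rw [mcurl_eq_rowCurl, hRW, rowCurl_mul_left, mnormSq_mul_left hQ]
  have hderiv : ∀ k, mnormSq (pderivM R k x) = mnormSq (W k) := fun k => by
    rw [congrFun hRW k, mnormSq_mul_left hQ]
  simp only [hcurl, hderiv]
  exact mnormSq_rowCurl_le_and_sum_mnormSq_le hW
end
end

section
/- Let n ∈ ℝ³ with ‖n‖ = 1 and let K ∈ ℝ^{3×3} satisfy K n = 0. Define the tangential and normal parts K^∥ := (𝟙₃ − n ⊗ n) K and K^⊥ := (n ⊗ n) K. Then: ‖sym K‖² = ‖sym K^∥‖² + (1/2)‖Kᵀn‖², ‖skew K‖² = ‖skew K^∥‖² + (1/2)‖Kᵀn‖², tr(K^∥) = tr(K), and ‖K^⊥‖² = ‖Kᵀn‖². -/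
open Matrix

noncomputable section

/-- Symmetric part of a matrix. -/
def msym {n : ℕ} (X : Matrix (Fin n) (Fin n) ℝ) : Matrix (Fin n) (Fin n) ℝ :=
  (1 / 2 : ℝ) • (X + Xᵀ)

/-- Skew-symmetric part of a matrix. -/
def mskew {n : ℕ} (X : Matrix (Fin n) (Fin n) ℝ) : Matrix (Fin n) (Fin n) ℝ :=
  (1 / 2 : ℝ) • (X - Xᵀ)

/-- Squared Euclidean norm on `ℝ³`. -/
def vnormSq (v : Fin 3 → ℝ) : ℝ := ∑ i, (v i) ^ 2

/-! With `P = n ⊗ n`, the orthogonal projection onto `n`, the hypothesis `K n = 0` says `K P = 0`.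
Since `‖sym X‖²` and `‖skew X‖²` equal `(‖X‖² ± tr X²) / 2`, it suffices to know that
`‖K‖² = ‖(1 - P) K‖² + ‖P K‖²` (Pythagoras for the complementary projections `1 - P` and `P`),
that `tr ((1 - P) K)² = tr K²` because `K (1 - P) = K`, and that `‖P K‖² = ‖n ⊗ Kᵀn‖² = ‖Kᵀn‖²`. -/

section

variable {m : ℕ}

theorem mnormSq_msym (X : Matrix (Fin m) (Fin m) ℝ) :
    mnormSq (msym X) = (mnormSq X + trace (X * X)) / 2 := by
  have hXXt : trace (X * Xᵀ) = trace (Xᵀ * X) := trace_mul_comm X Xᵀ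
  have hXtXt : trace (X * X) = trace (Xᵀ * Xᵀ) := by rw [← transpose_mul, trace_transpose]
  simp only [mnormSq, msym, transpose_smul, transpose_add, transpose_transpose, smul_mul_smul,
    add_mul, mul_add, trace_smul, trace_add, smul_eq_mul]
  linear_combination (1 / 4 : ℝ) * hXXt - (1 / 4 : ℝ) * hXtXt

theorem mnormSq_mskew (X : Matrix (Fin m) (Fin m) ℝ) :
    mnormSq (mskew X) = (mnormSq X - trace (X * X)) / 2 := by
  have hXXt : trace (X * Xᵀ) = trace (Xᵀ * X) := trace_mul_comm X Xᵀ
  have hXtXt : trace (X * X) = trace (Xᵀ * Xᵀ) := by rw [← transpose_mul, trace_transpose]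
  simp only [mnormSq, mskew, transpose_smul, transpose_sub, transpose_transpose, smul_mul_smul,
    sub_mul, mul_sub, trace_smul, trace_sub, smul_eq_mul]
  linear_combination (1 / 4 : ℝ) * hXXt + (1 / 4 : ℝ) * hXtXt

theorem mnormSq_vecMulVec (u v : Fin m → ℝ) :
    mnormSq (vecMulVec u v) = (u ⬝ᵥ u) * (v ⬝ᵥ v) := by
  rw [mnormSq, transpose_vecMulVec, vecMulVec_mul_vecMulVec, trace_vecMulVec, dotProduct_smul,
    smul_eq_mul, mul_comm]

theorem mnormSq_one_sub_mul_add_mnormSq_mul {P : Matrix (Fin m) (Fin m) ℝ}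
    (hPt : P.IsSymm) (hPP : IsIdempotentElem P) (K : Matrix (Fin m) (Fin m) ℝ) :
    mnormSq ((1 - P) * K) + mnormSq (P * K) = mnormSq K := by
  simp only [mnormSq, transpose_mul, transpose_sub, transpose_one, hPt.eq]
  rw [mul_assoc, ← mul_assoc (1 - P), hPP.one_sub.eq, mul_assoc, ← mul_assoc P, hPP.eq,
    ← trace_add, ← mul_add, ← add_mul, sub_add_cancel, one_mul]

theorem trace_one_sub_mul_of_mul_eq_zero {K P : Matrix (Fin m) (Fin m) ℝ} (hKP : K * P = 0) :
    trace ((1 - P) * K) = trace K := by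
  rw [sub_mul, one_mul, trace_sub, trace_mul_comm, hKP, trace_zero, sub_zero]

theorem trace_sq_one_sub_mul_of_mul_eq_zero {K P : Matrix (Fin m) (Fin m) ℝ} (hKP : K * P = 0) :
    trace ((1 - P) * K * ((1 - P) * K)) = trace (K * K) := by
  have hKQ : K * (1 - P) = K := by rw [mul_sub, hKP, mul_one, sub_zero]
  rw [mul_assoc, ← mul_assoc K, hKQ,
    trace_one_sub_mul_of_mul_eq_zero (by rw [mul_assoc, hKP, mul_zero])]

theorem vnormSq_eq_dotProduct (v : Fin 3 → ℝ) : vnormSq v = v ⬝ᵥ v := by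
  simp only [vnormSq, dotProduct, sq]

end

theorem stmt_15 (n : Fin 3 → ℝ) (hn : vnormSq n = 1)
    (K : Matrix (Fin 3) (Fin 3) ℝ) (hK : K.mulVec n = 0) :
    mnormSq (msym K)
        = mnormSq (msym (((1 : Matrix (Fin 3) (Fin 3) ℝ) - vecMulVec n n) * K))
          + (1 / 2 : ℝ) * vnormSq (Kᵀ.mulVec n) ∧
    mnormSq (mskew K)
        = mnormSq (mskew (((1 : Matrix (Fin 3) (Fin 3) ℝ) - vecMulVec n n) * K))
          + (1 / 2 : ℝ) * vnormSq (Kᵀ.mulVec n) ∧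
    Matrix.trace (((1 : Matrix (Fin 3) (Fin 3) ℝ) - vecMulVec n n) * K)
        = Matrix.trace K ∧
    mnormSq (vecMulVec n n * K) = vnormSq (Kᵀ.mulVec n) := by
  set P := vecMulVec n n
  have hnn : n ⬝ᵥ n = 1 := by rwa [← vnormSq_eq_dotProduct]
  have hPt : P.IsSymm := transpose_vecMulVec n n
  have hPP : IsIdempotentElem P := by
    rw [IsIdempotentElem, vecMulVec_mul_vecMulVec, hnn, one_smul]
  have hKP : K * P = 0 := by rw [mul_vecMulVec, hK, zero_vecMulVec]
  have hnormal : mnormSq (P * K) = vnormSq (Kᵀ *ᵥ n) := by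
    rw [vecMulVec_mul, mnormSq_vecMulVec, hnn, one_mul, ← mulVec_transpose, vnormSq_eq_dotProduct]
  have hpyth := (mnormSq_one_sub_mul_add_mnormSq_mul hPt hPP K).symm
  have htr := trace_sq_one_sub_mul_of_mul_eq_zero hKP
  refine ⟨?_, ?_, trace_one_sub_mul_of_mul_eq_zero hKP, hnormal⟩
  · rw [mnormSq_msym, mnormSq_msym, hpyth, hnormal, htr]; ring
  · rw [mnormSq_mskew, mnormSq_mskew, hpyth, hnormal, htr]; ring
end
end

section
/- Let b₁, b₂, b₃ > 0, let n ∈ ℝ³ with ‖n‖ = 1, and let K ∈ ℝ^{3×3} satisfy K n = 0. If c ∈ ℝ³ is a critical point (vanishing gradient) of the function c ↦ b₁‖sym(K + c ⊗ n)‖² + b₂‖skew(K + c ⊗ n)‖² + b₃ (tr(K + c ⊗ n))², then c satisfies the Euler–Lagrange equation [ (b₁+b₂)(𝟙₃ − n ⊗ n) + 2(b₁+b₃) n ⊗ n ] c = (b₂ − b₁) Kᵀn − 2 b₃ tr(K) n. -/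
/-!
Along every line `c + t • v` the energy of `K + c ⊗ n` is a quadratic polynomial in `t` whose
linear coefficient is `v ⬝ g` with `g = (b₁ + b₂) X n + (b₁ - b₂) Xᵀ n + 2 b₃ (tr X) n`,
`X = K + c ⊗ n`; this uses that `sym` and `skew` are orthogonal projections for the trace form.
So a critical point has `g = 0`, and since `K n = 0` and `n ⬝ n = 1` we have `X n = c`,
`Xᵀ n = Kᵀ n + (c ⬝ n) n` and `tr X = tr K + c ⬝ n`, which turns `g = 0` into the
Euler–Lagrange equation.
-/

open Matrix

noncomputable section

section

variable {m : ℕ}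

lemma msym_add_smul (X H : Matrix (Fin m) (Fin m) ℝ) (t : ℝ) :
    msym (X + t • H) = msym X + t • msym H := by
  simp only [msym, transpose_add, transpose_smul]
  module

lemma mskew_add_smul (X H : Matrix (Fin m) (Fin m) ℝ) (t : ℝ) :
    mskew (X + t • H) = mskew X + t • mskew H := by
  simp only [mskew, transpose_add, transpose_smul]
  module

lemma mnormSq_add_smul (X H : Matrix (Fin m) (Fin m) ℝ) (t : ℝ) :
    mnormSq (X + t • H) = mnormSq X + t * (2 * trace (Xᵀ * H)) + t ^ 2 * mnormSq H := by
  have : trace (Hᵀ * X) = trace (Xᵀ * H) := by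
    rw [← trace_transpose, transpose_mul, transpose_transpose]
  simp only [mnormSq, transpose_add, transpose_smul, Matrix.add_mul, Matrix.mul_add,
    Matrix.smul_mul, Matrix.mul_smul, trace_add, trace_smul, smul_eq_mul, this]
  ring

lemma msym_transpose (X : Matrix (Fin m) (Fin m) ℝ) : (msym X)ᵀ = msym X := by
  simp only [msym, transpose_smul, transpose_add, transpose_transpose, add_comm]

lemma mskew_transpose (X : Matrix (Fin m) (Fin m) ℝ) : (mskew X)ᵀ = -mskew X := by
  simp only [mskew, transpose_smul, transpose_sub, transpose_transpose, ← smul_neg, neg_sub]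

lemma trace_mul_transpose_comm {ι κ R : Type*} [Fintype ι] [Fintype κ] [CommSemiring R]
    (A B : Matrix ι κ R) :
    trace (A * Bᵀ) = trace (B * Aᵀ) := by
  rw [← trace_transpose, transpose_mul, transpose_transpose]

lemma trace_msym_mul_msym (X H : Matrix (Fin m) (Fin m) ℝ) :
    trace ((msym X)ᵀ * msym H) = trace ((msym X)ᵀ * H) := by
  have h : trace ((msym X)ᵀ * Hᵀ) = trace ((msym X)ᵀ * H) := by
    rw [trace_mul_transpose_comm, transpose_transpose, trace_mul_comm, msym_transpose]
  have hH : msym H = (1 / 2 : ℝ) • (H + Hᵀ) := rfl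
  rw [hH, Matrix.mul_smul, Matrix.mul_add, trace_smul, trace_add, h, smul_eq_mul]
  ring

lemma trace_mskew_mul_mskew (X H : Matrix (Fin m) (Fin m) ℝ) :
    trace ((mskew X)ᵀ * mskew H) = trace ((mskew X)ᵀ * H) := by
  have h : trace ((mskew X)ᵀ * Hᵀ) = -trace ((mskew X)ᵀ * H) := by
    rw [trace_mul_transpose_comm, transpose_transpose, trace_mul_comm, mskew_transpose,
      Matrix.neg_mul, trace_neg, neg_neg]
  have hH : mskew H = (1 / 2 : ℝ) • (H - Hᵀ) := rfl
  rw [hH, Matrix.mul_smul, Matrix.mul_sub, trace_smul, trace_sub, h, smul_eq_mul]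
  ring

lemma trace_transpose_mul_vecMulVec {ι κ R : Type*} [Fintype ι] [Fintype κ] [CommSemiring R]
    (A : Matrix ι κ R) (v : ι → R) (w : κ → R) :
    trace (Aᵀ * vecMulVec v w) = v ⬝ᵥ (A *ᵥ w) := by
  rw [mul_vecMulVec, trace_vecMulVec, mulVec_transpose, dotProduct_mulVec]

lemma hasDerivAt_quadratic {φ : ℝ → ℝ} {a d e : ℝ} (h : ∀ t, φ t = a + t * d + t ^ 2 * e) :
    HasDerivAt φ d 0 := by
  rw [funext h]
  simpa using (((hasDerivAt_id (0 : ℝ)).mul_const d).const_add a).fun_add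
    ((hasDerivAt_pow 2 (0 : ℝ)).mul_const e)

def isotropicEnergy (b₁ b₂ b₃ : ℝ) (X : Matrix (Fin m) (Fin m) ℝ) : ℝ :=
  b₁ * mnormSq (msym X) + b₂ * mnormSq (mskew X) + b₃ * trace X ^ 2

def isotropicEnergyGradient (b₁ b₂ b₃ : ℝ) (X : Matrix (Fin m) (Fin m) ℝ) (n : Fin m → ℝ) :
    Fin m → ℝ :=
  (b₁ + b₂) • X *ᵥ n + (b₁ - b₂) • Xᵀ *ᵥ n + (2 * b₃ * trace X) • n

variable (b₁ b₂ b₃ : ℝ)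

lemma isotropicEnergy_add_smul (X H : Matrix (Fin m) (Fin m) ℝ) (t : ℝ) :
    isotropicEnergy b₁ b₂ b₃ (X + t • H) = isotropicEnergy b₁ b₂ b₃ X
      + t * (2 * (b₁ * trace ((msym X)ᵀ * H) + b₂ * trace ((mskew X)ᵀ * H)
        + b₃ * trace X * trace H))
      + t ^ 2 * isotropicEnergy b₁ b₂ b₃ H := by
  simp only [isotropicEnergy, msym_add_smul, mskew_add_smul, mnormSq_add_smul,
    trace_msym_mul_msym, trace_mskew_mul_mskew, trace_add, trace_smul, smul_eq_mul]
  ring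

lemma hasLineDerivAt_isotropicEnergy (K : Matrix (Fin m) (Fin m) ℝ) (n c v : Fin m → ℝ) :
    HasLineDerivAt ℝ (fun c => isotropicEnergy b₁ b₂ b₃ (K + vecMulVec c n))
      (v ⬝ᵥ isotropicEnergyGradient b₁ b₂ b₃ (K + vecMulVec c n) n) c v := by
  refine hasDerivAt_quadratic (a := isotropicEnergy b₁ b₂ b₃ (K + vecMulVec c n))
    (e := isotropicEnergy b₁ b₂ b₃ (vecMulVec v n)) fun t => ?_
  beta_reduce
  rw [add_vecMulVec, smul_vecMulVec, ← add_assoc, isotropicEnergy_add_smul]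
  congr 2
  simp only [trace_transpose_mul_vecMulVec, trace_vecMulVec, isotropicEnergyGradient, msym,
    mskew, add_mulVec, sub_mulVec, smul_mulVec, dotProduct_add, dotProduct_sub, dotProduct_smul,
    smul_eq_mul]
  ring

lemma differentiable_isotropicEnergy (K : Matrix (Fin m) (Fin m) ℝ) (n : Fin m → ℝ) :
    Differentiable ℝ (fun c => isotropicEnergy b₁ b₂ b₃ (K + vecMulVec c n)) := by
  simp only [isotropicEnergy, mnormSq, msym, mskew, trace, diag, mul_apply, transpose_apply,
    Matrix.smul_apply, Matrix.add_apply, Matrix.sub_apply, vecMulVec_apply, smul_eq_mul]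
  fun_prop

lemma isotropicEnergyGradient_eq_zero_of_fderiv_eq_zero {K : Matrix (Fin m) (Fin m) ℝ}
    {n c : Fin m → ℝ}
    (hc : fderiv ℝ (fun c => isotropicEnergy b₁ b₂ b₃ (K + vecMulVec c n)) c = 0) :
    isotropicEnergyGradient b₁ b₂ b₃ (K + vecMulVec c n) n = 0 := by
  set g := isotropicEnergyGradient b₁ b₂ b₃ (K + vecMulVec c n) n
  have h := (hasLineDerivAt_isotropicEnergy b₁ b₂ b₃ K n c g).lineDeriv
  rw [(differentiable_isotropicEnergy b₁ b₂ b₃ K n c).lineDeriv_eq_fderiv, hc] at h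
  exact dotProduct_self_eq_zero.mp h.symm

lemma isotropicEnergyGradient_add_vecMulVec {K : Matrix (Fin m) (Fin m) ℝ} {n : Fin m → ℝ}
    (hK : K *ᵥ n = 0) (hn : n ⬝ᵥ n = 1) (c : Fin m → ℝ) :
    isotropicEnergyGradient b₁ b₂ b₃ (K + vecMulVec c n) n
      = ((b₁ + b₂) • (1 - vecMulVec n n) + (2 * (b₁ + b₃)) • vecMulVec n n) *ᵥ c
        - ((b₂ - b₁) • Kᵀ *ᵥ n - (2 * b₃ * trace K) • n) := by
  simp only [isotropicEnergyGradient, add_mulVec, sub_mulVec, smul_mulVec, one_mulVec,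
    transpose_add, transpose_vecMulVec, vecMulVec_mulVec, op_smul_eq_smul, hK, hn,
    trace_add, trace_vecMulVec, dotProduct_comm n c]
  module

end

theorem stmt_16_general (b₁ b₂ b₃ : ℝ) (n : Fin 3 → ℝ) (hn : ∑ i, (n i) ^ 2 = 1)
    (K : Matrix (Fin 3) (Fin 3) ℝ) (hK : K.mulVec n = 0)
    (c : Fin 3 → ℝ)
    (hcrit : fderiv ℝ (fun c : Fin 3 → ℝ =>
        b₁ * mnormSq (msym (K + vecMulVec c n))
          + b₂ * mnormSq (mskew (K + vecMulVec c n))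
          + b₃ * (Matrix.trace (K + vecMulVec c n)) ^ 2) c = 0) :
    ((b₁ + b₂) • ((1 : Matrix (Fin 3) (Fin 3) ℝ) - vecMulVec n n)
        + (2 * (b₁ + b₃)) • vecMulVec n n).mulVec c
      = (b₂ - b₁) • Kᵀ.mulVec n - (2 * b₃ * Matrix.trace K) • n := by
  have hnn : n ⬝ᵥ n = 1 := by simpa only [dotProduct, sq] using hn
  have hgrad := isotropicEnergyGradient_eq_zero_of_fderiv_eq_zero b₁ b₂ b₃ hcrit
  rwa [isotropicEnergyGradient_add_vecMulVec b₁ b₂ b₃ hK hnn, sub_eq_zero] at hgrad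

theorem stmt_16 (b₁ b₂ b₃ : ℝ) (hb₁ : 0 < b₁) (hb₂ : 0 < b₂) (hb₃ : 0 < b₃)
    (n : Fin 3 → ℝ) (hn : ∑ i, (n i) ^ 2 = 1)
    (K : Matrix (Fin 3) (Fin 3) ℝ) (hK : K.mulVec n = 0)
    (c : Fin 3 → ℝ)
    (hcrit : fderiv ℝ (fun c : Fin 3 → ℝ =>
        b₁ * mnormSq (msym (K + vecMulVec c n))
          + b₂ * mnormSq (mskew (K + vecMulVec c n))
          + b₃ * (Matrix.trace (K + vecMulVec c n)) ^ 2) c = 0) :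
    ((b₁ + b₂) • ((1 : Matrix (Fin 3) (Fin 3) ℝ) - vecMulVec n n)
        + (2 * (b₁ + b₃)) • vecMulVec n n).mulVec c
      = (b₂ - b₁) • Kᵀ.mulVec n - (2 * b₃ * Matrix.trace K) • n :=
  stmt_16_general b₁ b₂ b₃ n hn K hK c hcrit
end
end
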